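/- arXiv:1904.06694 — 4 statements merged into one kernel-verified Lean document; each statement's English description precedes it below -/
import Mathlib

section
/- Let A be a commutative ring with elements a, b such that a, b, a-1, b-1, and a-b are all units, and let α, β be arbitrary elements of A. Then α³/(a(a-1))² − β³/(b(b-1))² + (aβ−bα)³/(ab(a−b))² − (b(b−1)α−a(a−1)β)³/(ab(a−1)(b−1)(a−b))² + ((b−1)α−(a−1)β)³/((a−1)(b−1)(a−b))² = 0. -/
/-- The five-term algebraic identity underlying the functional equation of the
infinitesimal dilogarithm. The inverses of `a`, `b`, `a-1`, `b-1`, `a-b` are given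
explicitly as `ia`, `ib`, `ia1`, `ib1`, `iab`. -/
theorem five_term_identity {A : Type*} [CommRing A]
    (a b ia ib ia1 ib1 iab α β : A)
    (ha : a * ia = 1) (hb : b * ib = 1)
    (ha1 : (a - 1) * ia1 = 1) (hb1 : (b - 1) * ib1 = 1)
    (hab : (a - b) * iab = 1) :
    α ^ 3 * (ia * ia1) ^ 2
      - β ^ 3 * (ib * ib1) ^ 2
      + (a * β - b * α) ^ 3 * (ia * ib * iab) ^ 2
      - (b * (b - 1) * α - a * (a - 1) * β) ^ 3 * (ia * ib * ia1 * ib1 * iab) ^ 2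
      + ((b - 1) * α - (a - 1) * β) ^ 3 * (ia1 * ib1 * iab) ^ 2 = 0 := by
  have h1 : ia * ia1 = b * (b - 1) * (a - b) * (ia * ib * ia1 * ib1 * iab) := by
    calc ia * ia1 = ((b * ib) * ((b - 1) * ib1) * ((a - b) * iab)) * (ia * ia1) := by
          rw [hb, hb1, hab]; ring
      _ = _ := by ring
  have h2 : ib * ib1 = a * (a - 1) * (a - b) * (ia * ib * ia1 * ib1 * iab) := by
    calc ib * ib1 = ((a * ia) * ((a - 1) * ia1) * ((a - b) * iab)) * (ib * ib1) := by
          rw [ha, ha1, hab]; ring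
      _ = _ := by ring
  have h3 : ia * ib * iab = (a - 1) * (b - 1) * (ia * ib * ia1 * ib1 * iab) := by
    calc ia * ib * iab = (((a - 1) * ia1) * ((b - 1) * ib1)) * (ia * ib * iab) := by
          rw [ha1, hb1]; ring
      _ = _ := by ring
  have h5 : ia1 * ib1 * iab = a * b * (ia * ib * ia1 * ib1 * iab) := by
    calc ia1 * ib1 * iab = ((a * ia) * (b * ib)) * (ia1 * ib1 * iab) := by
          rw [ha, hb]; ring
      _ = _ := by ring
  rw [h1, h2, h3, h5]
  ring
end

section
/- Let Q-algebra B, elements a ∈ B with a and a−1 invertible, and α ∈ B with α³ = 0 (so that log(1 + α/(a−1)) and log(1 + α/a) are defined by finite series). Then log(1 + α/(a−1))·d(log(a(1+α/a))) − log(1 + α/a)·d(log((a−1)(1+α/(a−1)))) ≡ (1/2)·α² dα /((a−1)²a²) modulo terms in the ideal generated by α³ and α²dα·(correction terms vanishing mod α³dB). -/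
/-- The leading-term computation for `log° ∧ dlog` applied to
`δ([a+α]) = (a−1)(1+α/(a−1)) ∧ a(1+α/a)`, for `α` with `α³ = 0`.  Inverses are
given explicitly: `ia` for `a`, `ia1` for `a−1`; the inverses of `a+α` and
`(a−1)+α` are then given by finite geometric series.  The result equals
`(1/2)·α²dα/((a−1)²a²)` modulo the submodule generated by `α²·da` and the
elements `α³·x` (the latter vanish since `α³ = 0`). -/
theorem log_dlog_leading_term {B M : Type*} [CommRing B] [Algebra ℚ B]
    [AddCommGroup M] [Module B M] [Module ℚ M] [IsScalarTower ℚ B M]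
    (d : Derivation ℚ B M) (a ia ia1 α : B)
    (ha : a * ia = 1) (ha1 : (a - 1) * ia1 = 1) (hα : α ^ 3 = 0) :
    ((α * ia1 - algebraMap ℚ B (1/2) * (α * ia1) ^ 2) *
        (ia - α * ia ^ 2 + α ^ 2 * ia ^ 3)) • d (a + α)
      - ((α * ia - algebraMap ℚ B (1/2) * (α * ia) ^ 2) *
        (ia1 - α * ia1 ^ 2 + α ^ 2 * ia1 ^ 3)) • d (a - 1 + α)
      - (algebraMap ℚ B (1/2) * α ^ 2 * ia1 ^ 2 * ia ^ 2) • d α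
      ∈ Submodule.span B ({α ^ 2 • d a} ∪ Set.range fun x : M => α ^ 3 • x) := by
  set H := algebraMap ℚ B (1/2) with hH
  have g4 : 2 * H = 1 := by
    rw [hH, ← map_ofNat (algebraMap ℚ B) 2, ← map_mul, ← map_one (algebraMap ℚ B)]
    norm_num
  have g5 : ia * ia1 = ia1 - ia := by linear_combination ia1 * ha - ia * ha1
  have e1 : d (a + α) = d a + d α := by simp
  have e2 : d (a - 1 + α) = d a + d α := by simp
  have key :
      ((α * ia1 - H * (α * ia1) ^ 2) * (ia - α * ia ^ 2 + α ^ 2 * ia ^ 3)) • d (a + α)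
        - ((α * ia - H * (α * ia) ^ 2) * (ia1 - α * ia1 ^ 2 + α ^ 2 * ia1 ^ 3)) • d (a - 1 + α)
        - (H * α ^ 2 * ia1 ^ 2 * ia ^ 2) • d α
        = (H * ia ^ 2 * ia1 ^ 2) • (α ^ 2 • d a) := by
    rw [e1, e2, smul_smul]
    match_scalars
    · linear_combination ((-2) * α ^ 2 + 4 * α ^ 2 * H + 6 * α ^ 4 * H + 1 * ia1 * α ^ 2 + (-2) * ia1 * α ^ 2 * H + 1 * ia1 * α ^ 3 + (-3) * ia1 * α ^ 4 * H + (-1) * ia1 ^ 2 * α ^ 3 + 1 * ia1 ^ 2 * α ^ 4 * H + (-1) * ia * α ^ 2 + 2 * ia * α ^ 2 * H + 1 * ia * α ^ 3 + 3 * ia * α ^ 4 * H + (-1) * ia * ia1 * α ^ 2 * H + (-2) * ia * ia1 * α ^ 4 * H + 1 * ia * ia1 ^ 2 * α ^ 4 * H + 1 * ia ^ 2 * α ^ 3 + 1 * ia ^ 2 * α ^ 4 * H + (-1) * ia ^ 2 * ia1 * α ^ 4 * H) * g5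
        + (6 * ia1 * α * H + 1 * ia1 ^ 2 + (-3) * ia1 ^ 2 * α * H + (-1) * ia1 ^ 3 + 1 * ia1 ^ 3 * α * H + (-6) * ia * α * H + (-1) * ia ^ 2 + (-3) * ia ^ 2 * α * H + (-1) * ia ^ 3 + (-1) * ia ^ 3 * α * H) * hα
        + (2 * ia1 * α ^ 2 + (-1) * ia1 ^ 2 * α ^ 2 + (-2) * ia * α ^ 2 + (-1) * ia ^ 2 * α ^ 2) * g4
    · linear_combination ((-2) * α ^ 2 + 4 * α ^ 2 * H + 6 * α ^ 4 * H + 1 * ia1 * α ^ 2 + (-2) * ia1 * α ^ 2 * H + 1 * ia1 * α ^ 3 + (-3) * ia1 * α ^ 4 * H + (-1) * ia1 ^ 2 * α ^ 3 + 1 * ia1 ^ 2 * α ^ 4 * H + (-1) * ia * α ^ 2 + 2 * ia * α ^ 2 * H + 1 * ia * α ^ 3 + 3 * ia * α ^ 4 * H + (-1) * ia * ia1 * α ^ 2 * H + (-2) * ia * ia1 * α ^ 4 * H + 1 * ia * ia1 ^ 2 * α ^ 4 * H + 1 * ia ^ 2 * α ^ 3 + 1 * ia ^ 2 * α ^ 4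 * H + (-1) * ia ^ 2 * ia1 * α ^ 4 * H) * g5
        + (6 * ia1 * α * H + 1 * ia1 ^ 2 + (-3) * ia1 ^ 2 * α * H + (-1) * ia1 ^ 3 + 1 * ia1 ^ 3 * α * H + (-6) * ia * α * H + (-1) * ia ^ 2 + (-3) * ia ^ 2 * α * H + (-1) * ia ^ 3 + (-1) * ia ^ 3 * α * H) * hα
        + (2 * ia1 * α ^ 2 + (-1) * ia1 ^ 2 * α ^ 2 + (-2) * ia * α ^ 2 + (-1) * ia ^ 2 * α ^ 2) * g4
  rw [key]
  exact Submodule.smul_mem _ _ (Submodule.subset_span (Set.mem_union_left _ rfl))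
end

section
/- Let A̅ be a commutative ring, I a free A̅-module, S = Sym_{A̅}(I), Ĩ the augmentation ideal, and J = Ĩ². Then the kernel of the natural map J/J² → Ω¹_{S}/J·Ω¹_{S} induced by the universal derivation d is exactly Ĩ³/Ĩ⁴. -/
/-!
`Ω¹_S` is free on the `dXᵢ` with `dj = ∑ ∂ᵢj dXᵢ`, so `dj ∈ Ĩ²Ω¹_S` iff every `∂ᵢj ∈ Ĩ²`, and
`Ĩⁿ` consists of the polynomials without monomials of degree `< n`. The coefficient of `X^m` in
`∂ᵢj` is `(mᵢ + 1)` times that of `X^(m + eᵢ)` in `j`; over `ℚ` this factor is invertible, so the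
partial derivatives of `j ∈ Ĩ` all lie in `Ĩⁿ` exactly when `j ∈ Ĩⁿ⁺¹`.
-/

open MvPolynomial

theorem Module.Basis.mem_smul_top_iff {S M ι : Type*} [CommSemiring S] [AddCommMonoid M]
    [Module S M] (b : Module.Basis ι S M) (q : Ideal S) (x : M) :
    x ∈ q • (⊤ : Submodule S M) ↔ ∀ i, b.repr x i ∈ q := by
  constructor
  · intro hx
    refine Submodule.smul_induction_on hx (fun a ha m _ i => ?_) (fun y z hy hz i => ?_)
    · simpa using q.mul_mem_right _ ha
    · simpa using q.add_mem (hy i) (hz i)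
  · intro hx
    rw [← b.linearCombination_repr x, Finsupp.linearCombination_apply]
    exact Submodule.sum_mem _ fun i _ => Submodule.smul_mem_smul (hx i) trivial

theorem isUnit_natCast_add_one (R : Type*) [CommRing R] [Algebra ℚ R] (k : ℕ) :
    IsUnit ((k : R) + 1) := by
  simpa using (k.cast_add_one_ne_zero : (k : ℚ) + 1 ≠ 0).isUnit.map (algebraMap ℚ R)

namespace MvPolynomial

variable {R σ : Type*}

theorem ker_constantCoeff_eq_idealOfVars [CommSemiring R] :
    RingHom.ker (constantCoeff : MvPolynomial σ R →+* R) = idealOfVars σ R := by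
  ext p
  rw [RingHom.mem_ker, ← pow_one (idealOfVars σ R), mem_pow_idealOfVars_iff']
  simp [Finsupp.degree_eq_zero_iff, constantCoeff]

theorem pderiv_mem_pow_idealOfVars [CommSemiring R] {n : ℕ} {p : MvPolynomial σ R}
    (hp : p ∈ idealOfVars σ R ^ (n + 1)) (i : σ) : pderiv i p ∈ idealOfVars σ R ^ n := by
  rw [mem_pow_idealOfVars_iff'] at hp ⊢
  intro m hm
  rw [coeff_pderiv, hp _ (by simpa using hm), zero_mul]

theorem mem_pow_succ_idealOfVars_of_pderiv_mem [CommRing R] [Algebra ℚ R] {n : ℕ}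
    {p : MvPolynomial σ R} (hp : p ∈ idealOfVars σ R)
    (hpderiv : ∀ i, pderiv i p ∈ idealOfVars σ R ^ n) : p ∈ idealOfVars σ R ^ (n + 1) := by
  simp only [mem_pow_idealOfVars_iff'] at hpderiv ⊢
  intro m hm
  by_cases hm0 : m = 0
  · rw [← ker_constantCoeff_eq_idealOfVars, RingHom.mem_ker, constantCoeff_eq] at hp
    rwa [hm0]
  obtain ⟨i, hi⟩ := Finsupp.ne_iff.mp hm0
  obtain ⟨m', rfl⟩ : ∃ m', m = m' + Finsupp.single i 1 :=
    ⟨m - Finsupp.single i 1, (tsub_add_cancel_of_le (Finsupp.single_le_iff.mpr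
      (Nat.one_le_iff_ne_zero.mpr hi))).symm⟩
  have h := hpderiv i m' (by simpa using hm)
  rwa [coeff_pderiv, (isUnit_natCast_add_one R _).mul_left_eq_zero] at h

theorem pderiv_mem_pow_idealOfVars_iff [CommRing R] [Algebra ℚ R] {n : ℕ}
    {p : MvPolynomial σ R} (hp : p ∈ idealOfVars σ R) :
    (∀ i, pderiv i p ∈ idealOfVars σ R ^ n) ↔ p ∈ idealOfVars σ R ^ (n + 1) :=
  ⟨mem_pow_succ_idealOfVars_of_pderiv_mem hp, pderiv_mem_pow_idealOfVars⟩

end MvPolynomial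

/-- Let `S = Sym(I)` be the symmetric algebra of a free module (realized as a
polynomial ring over the `ℚ`-algebra `R`), `Ĩ` its augmentation ideal and
`J = Ĩ²`.  The kernel of the map `J/J² → Ω¹_S/J·Ω¹_S`, `[j] ↦ [dj]`, is exactly
`Ĩ³/Ĩ⁴`; elementwise, for `j ∈ J = Ĩ²` one has `dj ∈ J·Ω¹_S` iff `j ∈ Ĩ³`. -/
theorem symAlg_conormal_kernel (R : Type*) [CommRing R] [Algebra ℚ R]
    (σ : Type*) :
    letI Itilde : Ideal (MvPolynomial σ R) :=
      RingHom.ker (constantCoeff : MvPolynomial σ R →+* R)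
    ∀ j ∈ Itilde ^ 2,
      (KaehlerDifferential.D R (MvPolynomial σ R) j ∈
          (Itilde ^ 2) •
            (⊤ : Submodule (MvPolynomial σ R)
              (KaehlerDifferential R (MvPolynomial σ R)))) ↔
        j ∈ Itilde ^ 3 := by
  intro j hj
  simp only [ker_constantCoeff_eq_idealOfVars] at hj ⊢
  rw [(KaehlerDifferential.mvPolynomialBasis R σ).mem_smul_top_iff]
  simp only [KaehlerDifferential.mvPolynomialBasis_repr_apply]
  exact pderiv_mem_pow_idealOfVars_iff (Ideal.pow_le_self two_ne_zero hj)
end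

section
/- Let A = A̅[t]/(xt, t²) where A̅ = Q[x], with square-zero ideal I = (t). Let B = A̅[t] and J = (xt, t²) ⊆ B. Then the element xt² ∈ J gives a nonzero class in the kernel of the map J/J² → Ω¹_B/J·Ω¹_B induced by d. -/
open MvPolynomial

/-- In `B = ℚ[x,t]` with `J = (xt, t²)` (so that `A = B/J = ℚ[x][t]/(xt,t²)` with
square-zero ideal `(t)`), the element `xt²` lies in `J`, its class in `J/J²` is
killed by the map `J/J² → Ω¹_B/J·Ω¹_B`, `[j] ↦ [dj]`, but is nonzero,
i.e. `xt² ∉ J²`. -/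
theorem nonzero_kernel_class :
    letI B := MvPolynomial (Fin 2) ℚ
    letI x : B := X 0
    letI t : B := X 1
    letI J : Ideal B := Ideal.span {x * t, t ^ 2}
    x * t ^ 2 ∈ J ∧
    (KaehlerDifferential.D ℚ B) (x * t ^ 2) ∈
      J • (⊤ : Submodule B (KaehlerDifferential ℚ B)) ∧
    x * t ^ 2 ∉ J ^ 2 := by
  set x : MvPolynomial (Fin 2) ℚ := X 0 with hx
  set t : MvPolynomial (Fin 2) ℚ := X 1 with ht
  set J : Ideal (MvPolynomial (Fin 2) ℚ) := Ideal.span {x * t, t ^ 2} with hJ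
  have hxt : x * t ∈ J := Ideal.subset_span (by simp)
  have ht2 : t ^ 2 ∈ J := Ideal.subset_span (by simp)
  refine ⟨Ideal.mul_mem_left _ x ht2, ?_, ?_⟩
  · have h : x * t ^ 2 = (x * t) * t := by ring
    rw [h, Derivation.leibniz, Derivation.leibniz, smul_add, smul_smul, smul_smul]
    refine Submodule.add_mem _ ?_ (Submodule.add_mem _ ?_ ?_)
    · exact Submodule.smul_mem_smul hxt Submodule.mem_top
    · exact Submodule.smul_mem_smul (by rwa [mul_comm t x]) Submodule.mem_top
    · have h2 : t * t = t ^ 2 := by ring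
      rw [h2]
      exact Submodule.smul_mem_smul ht2 Submodule.mem_top
  · intro hmem
    set ψ : MvPolynomial (Fin 2) ℚ →+* Polynomial ℚ :=
      (aeval (fun _ => Polynomial.X : Fin 2 → Polynomial ℚ)).toRingHom with hψ
    have h1 : ψ (x * t ^ 2) ∈ (J ^ 2).map ψ := Ideal.mem_map_of_mem ψ hmem
    have h2 : (J ^ 2).map ψ = (J.map ψ) ^ 2 := Ideal.map_pow ψ J 2
    have h3 : J.map ψ = Ideal.span {Polynomial.X ^ 2} := by
      rw [Ideal.map_span]
      have e1 : ψ (x * t) = Polynomial.X ^ 2 := by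
        simp [hψ, hx, ht]
        ring
      have e2 : ψ (t ^ 2) = Polynomial.X ^ 2 := by
        simp [hψ, ht]
      have himg : ψ '' {x * t, t ^ 2} = {Polynomial.X ^ 2} := by
        rw [Set.image_pair, e1, e2, Set.pair_eq_singleton]
      rw [himg]
    have h4 : ψ (x * t ^ 2) ∈ Ideal.span {Polynomial.X ^ 2} ^ 2 := by
      rwa [h2, h3] at h1
    rw [Ideal.span_singleton_pow, ← pow_mul] at h4
    rw [Ideal.mem_span_singleton] at h4
    obtain ⟨f, hf⟩ := h4
    have hval : ψ (x * t ^ 2) = Polynomial.X ^ 3 := by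
      simp [hψ, hx, ht]
      ring
    rw [hval, mul_comm] at hf
    have := congrArg (fun p => Polynomial.coeff p 3) hf
    simp [Polynomial.coeff_X_pow, Polynomial.coeff_mul_X_pow'] at this
end
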